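/- Let y, z : ℝ → ℝ be three times continuously differentiable with y''(s)² − z''(s)² > 0 for all s, set κ(s) = √(y''(s)² − z''(s)²) and τ(s) = (y''(s)·z'''(s) − y'''(s)·z''(s))/κ(s)², and let α_B(s) = B(s) = (1/κ(s))·(0, z''(s), y''(s)) be the binormal spherical representation of the admissible pseudo-Galilean curve α(s) = (s, y(s), z(s)). Then the pseudo-Galilean norm of B'(s) equals |τ(s)|; consequently the pseudo-Galilean arc length of α_B from 0 to s equals ∫₀ˢ |τ(u)| du, i.e., the arc length parameter s_B of α_B satisfies ds_B/ds = |τ(s)|. -/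

import Mathlib

/-- The pseudo-Galilean norm of a vector `(0, a, b)` is `√|a² − b²|`. -/
noncomputable def pgNorm (v : Fin 3 → ℝ) : ℝ := Real.sqrt |(v 1) ^ 2 - (v 2) ^ 2|

/-!
With `a = y''`, `b = z''` and `κ = √(a² − b²)`, the quotient rule gives
`B' = (W / κ³) • (0, a, b)` where `W = a b' − a' b = κ² τ`. The pseudo-Galilean norm of
`(0, a, b)` is `κ`, so `‖B'‖ = |W| / κ² = |τ|`. Since `τ` is continuous, the arc length
`∫₀ˢ |τ|` has derivative `|τ(s)|` by the fundamental theorem of calculus.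
-/

open Real

theorem pgNorm_smul_vec (c p q : ℝ) : pgNorm (c • ![0, p, q]) = |c| * √|p ^ 2 - q ^ 2| := by
  simp only [pgNorm, Pi.smul_apply, Matrix.cons_val_one, Matrix.cons_val_two, Matrix.head_cons,
    Matrix.tail_cons, Matrix.cons_val_zero, smul_eq_mul]
  rw [mul_pow, mul_pow, ← mul_sub, abs_mul, sqrt_mul (abs_nonneg _), abs_pow, sqrt_sq_eq_abs,
    abs_abs]

noncomputable def pgBinormal (a b : ℝ → ℝ) (s : ℝ) : Fin 3 → ℝ :=
  (√(a s ^ 2 - b s ^ 2))⁻¹ • ![0, b s, a s]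

section Binormal

variable {a b : ℝ → ℝ} {a' b' s : ℝ}

theorem hasDerivAt_inv_sqrt_sq_sub_sq_mul {c : ℝ → ℝ} {c' : ℝ} (ha : HasDerivAt a a' s)
    (hb : HasDerivAt b b' s) (hc : HasDerivAt c c' s) (hpos : 0 < a s ^ 2 - b s ^ 2) :
    HasDerivAt (fun u => (√(a u ^ 2 - b u ^ 2))⁻¹ * c u)
      ((c' * (a s ^ 2 - b s ^ 2) - c s * (a s * a' - b s * b')) / √(a s ^ 2 - b s ^ 2) ^ 3)
      s := by
  have hκ := ((ha.fun_pow 2).fun_sub (hb.fun_pow 2)).sqrt hpos.ne'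
  refine ((hκ.fun_inv (sqrt_pos.2 hpos).ne').fun_mul hc).congr_deriv ?_
  have hne := (sqrt_pos.2 hpos).ne'
  field_simp
  rw [sq_sqrt hpos.le]
  ring

theorem hasDerivAt_pgBinormal (ha : HasDerivAt a a' s) (hb : HasDerivAt b b' s)
    (hpos : 0 < a s ^ 2 - b s ^ 2) :
    HasDerivAt (pgBinormal a b)
      (((a s * b' - a' * b s) / √(a s ^ 2 - b s ^ 2) ^ 3) • ![0, a s, b s]) s := by
  rw [hasDerivAt_pi]
  intro i
  fin_cases i
  · simpa [pgBinormal] using hasDerivAt_const s (0 : ℝ)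
  · simpa [pgBinormal, smul_eq_mul] using
      (hasDerivAt_inv_sqrt_sq_sub_sq_mul ha hb hb hpos).congr_deriv (by ring)
  · simpa [pgBinormal, smul_eq_mul] using
      (hasDerivAt_inv_sqrt_sq_sub_sq_mul ha hb ha hpos).congr_deriv (by ring)

theorem pgNorm_deriv_pgBinormal (ha : HasDerivAt a a' s)
    (hb : HasDerivAt b b' s) (hpos : 0 < a s ^ 2 - b s ^ 2) :
    pgNorm (deriv (pgBinormal a b) s) = |(a s * b' - a' * b s) / (a s ^ 2 - b s ^ 2)| := by
  rw [(hasDerivAt_pgBinormal ha hb hpos).deriv, pgNorm_smul_vec, abs_of_pos hpos]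
  set κ := √(a s ^ 2 - b s ^ 2)
  have hκ : 0 < κ := sqrt_pos.2 hpos
  rw [← sq_sqrt hpos.le, abs_div, abs_div, abs_of_pos (pow_pos hκ 3), abs_of_pos (pow_pos hκ 2)]
  field_simp

end Binormal

/-- The pseudo-Galilean norm of `B'(s)` equals `|τ(s)|`; consequently the
pseudo-Galilean arc length of the binormal spherical representation
`α_B = B` satisfies `s_B(s) = ∫₀ˢ |τ(u)| du`, i.e. `ds_B/ds = |τ(s)|`. -/
theorem pseudo_galilean_binormal_spherical_arclength
    (y z κ τ sB : ℝ → ℝ) (αB : ℝ → Fin 3 → ℝ)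
    (hy : ContDiff ℝ 3 y) (hz : ContDiff ℝ 3 z)
    (hadm : ∀ s, 0 < (deriv (deriv y) s) ^ 2 - (deriv (deriv z) s) ^ 2)
    (hκ : ∀ s, κ s = Real.sqrt ((deriv (deriv y) s) ^ 2 - (deriv (deriv z) s) ^ 2))
    (hτ : ∀ s, τ s =
      (deriv (deriv y) s * deriv (deriv (deriv z)) s
        - deriv (deriv (deriv y)) s * deriv (deriv z) s) / (κ s) ^ 2)
    (hαB : ∀ s, αB s = (κ s)⁻¹ • ![0, deriv (deriv z) s, deriv (deriv y) s])
    (hsB : ∀ s, sB s = ∫ u in (0:ℝ)..s, pgNorm (deriv αB u)) :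
    (∀ s, pgNorm (deriv αB s) = |τ s|) ∧
    (∀ s, sB s = ∫ u in (0:ℝ)..s, |τ u|) ∧
    (∀ s, HasDerivAt sB (|τ s|) s) := by
  have ha : ContDiff ℝ 1 (deriv (deriv y)) := by simpa using hy.iterate_deriv' 1 2
  have hb : ContDiff ℝ 1 (deriv (deriv z)) := by simpa using hz.iterate_deriv' 1 2
  have hαB_eq : αB = pgBinormal (deriv (deriv y)) (deriv (deriv z)) :=
    funext fun s => by rw [hαB, hκ]; rfl
  have hτ_eq : τ = fun s => (deriv (deriv y) s * deriv (deriv (deriv z)) s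
      - deriv (deriv (deriv y)) s * deriv (deriv z) s)
      / (deriv (deriv y) s ^ 2 - deriv (deriv z) s ^ 2) :=
    funext fun s => by rw [hτ, hκ, sq_sqrt (hadm s).le]
  have hnorm (s : ℝ) : pgNorm (deriv αB s) = |τ s| := by
    rw [hαB_eq, hτ_eq, pgNorm_deriv_pgBinormal (ha.differentiable one_ne_zero s).hasDerivAt
      (hb.differentiable one_ne_zero s).hasDerivAt (hadm s)]
  have hτ_cont : Continuous τ := by
    rw [hτ_eq]
    refine Continuous.div ?_ ?_ fun s => (hadm s).ne'
    · exact (ha.continuous.mul (hb.continuous_deriv le_rfl)).sub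
        ((ha.continuous_deriv le_rfl).mul hb.continuous)
    · exact (ha.continuous.pow 2).sub (hb.continuous.pow 2)
  have hsB_eq : sB = fun s => ∫ u in (0:ℝ)..s, |τ u| :=
    funext fun s => by simp only [hsB, hnorm]
  refine ⟨hnorm, fun s => by rw [hsB_eq], fun s => ?_⟩
  rw [hsB_eq]
  exact (hτ_cont.abs.integral_hasStrictDerivAt 0 s).hasDerivAt
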